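/- For every integer α ≥ 5 and every real number β ≥ 0, t_S(α,β) ≤ t_P(α,β). -/
import Mathlib


/-- `ŝ(α,β) = ⌊√((2β + α + 1)/(4α))⌋`. -/
noncomputable def sHat (α : ℤ) (β : ℝ) : ℤ :=
  ⌊Real.sqrt ((2 * β + (α : ℝ) + 1) / (4 * (α : ℝ)))⌋

/-- `t_S(α,β) = 1 + α·ŝ(α,β) + (β + 1/2)/(2ŝ(α,β) + 1) - 1/2`, the continuous variant of the
PSD-throttling number of the balanced spider `T_{α,β}`. -/
noncomputable def tS (α : ℤ) (β : ℝ) : ℝ :=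
  1 + (α : ℝ) * (sHat α β : ℝ) + (β + 1 / 2) / (2 * (sHat α β : ℝ) + 1) - 1 / 2

/-- `t_P(α,β) = √(2(αβ + 1) + 1/4) - 1/2`, the continuous variant of the PSD-throttling
number of the path on `αβ + 1` vertices. -/
noncomputable def tP (α : ℤ) (β : ℝ) : ℝ :=
  Real.sqrt (2 * ((α : ℝ) * β + 1) + 1 / 4) - 1 / 2

set_option maxHeartbeats 1000000 in
/-- For every integer `α ≥ 5` and every real `β ≥ 0`, `t_S(α,β) ≤ t_P(α,β)`. -/
theorem stmt18 (α : ℤ) (hα : 5 ≤ α) (β : ℝ) (hβ : 0 ≤ β) :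
    tS α β ≤ tP α β := by
  have ha : (5 : ℝ) ≤ (α : ℝ) := by exact_mod_cast hα
  have ha0 : (0 : ℝ) < (α : ℝ) := by linarith
  have harg0 : 0 ≤ (2 * β + (α : ℝ) + 1) / (4 * (α : ℝ)) := by positivity
  have hs0 : (0 : ℤ) ≤ sHat α β :=
    Int.floor_nonneg.mpr (Real.sqrt_nonneg _)
  have ht0 : (0 : ℝ) ≤ ((sHat α β : ℤ) : ℝ) := by exact_mod_cast hs0
  have h2 : ((sHat α β : ℤ) : ℝ) ≤ Real.sqrt ((2 * β + (α : ℝ) + 1) / (4 * (α : ℝ))) :=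
    Int.floor_le _
  have h3 : Real.sqrt ((2 * β + (α : ℝ) + 1) / (4 * (α : ℝ))) < ((sHat α β : ℤ) : ℝ) + 1 :=
    Int.lt_floor_add_one _
  have hsq : Real.sqrt ((2 * β + (α : ℝ) + 1) / (4 * (α : ℝ))) ^ 2
      = (2 * β + (α : ℝ) + 1) / (4 * (α : ℝ)) := Real.sq_sqrt harg0
  set a : ℝ := (α : ℝ)
  set t : ℝ := ((sHat α β : ℤ) : ℝ)
  have hlo' : t ^ 2 ≤ (2 * β + a + 1) / (4 * a) := by
    nlinarith [Real.sqrt_nonneg ((2 * β + a + 1) / (4 * a))]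
  have hhi' : (2 * β + a + 1) / (4 * a) ≤ (t + 1) ^ 2 := by
    nlinarith [Real.sqrt_nonneg ((2 * β + a + 1) / (4 * a))]
  have h4a : (0 : ℝ) < 4 * a := by linarith
  have hlo : 4 * a * t ^ 2 ≤ 2 * β + a + 1 := by
    have := mul_le_mul_of_nonneg_right hlo' h4a.le
    rw [div_mul_cancel₀ _ (ne_of_gt h4a)] at this
    linarith
  have hhi : 2 * β + a + 1 ≤ 4 * a * (t + 1) ^ 2 := by
    have := mul_le_mul_of_nonneg_right hhi' h4a.le
    rw [div_mul_cancel₀ _ (ne_of_gt h4a)] at this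
    linarith
  have hu0 : (0 : ℝ) < 2 * t + 1 := by linarith
  have hLnn : 0 ≤ 1 + a * t + (β + 1 / 2) / (2 * t + 1) := by positivity
  have hX0 : (0 : ℝ) ≤ 2 * (a * β + 1) + 1 / 4 := by positivity
  have key : (1 + a * t + (β + 1 / 2) / (2 * t + 1)) ^ 2 ≤ 2 * (a * β + 1) + 1 / 4 := by
    have hrw : 1 + a * t + (β + 1 / 2) / (2 * t + 1)
        = ((1 + a * t) * (2 * t + 1) + (β + 1 / 2)) / (2 * t + 1) := by
      field_simp
    rw [hrw, div_pow, div_le_iff₀ (by positivity)]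
    rcases eq_or_lt_of_le hs0 with h0 | h1
    · -- s = 0
      have ht' : t = 0 := by
        show ((sHat α β : ℤ) : ℝ) = 0
        exact_mod_cast h0.symm
      rw [ht'] at hhi ⊢
      -- hhi : 2β + a + 1 ≤ 4a, goal : (β + 3/2)^2 ≤ (2aβ + 9/4)
      nlinarith [mul_nonneg hβ (show (0:ℝ) ≤ 2 * a - β - 3 by linarith)]
    · -- s ≥ 1
      have ht1 : (1 : ℝ) ≤ t := by
        show (1 : ℝ) ≤ ((sHat α β : ℤ) : ℝ)
        exact_mod_cast h1
      have hx : (0 : ℝ) ≤ a - 5 := by linarith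
      have hy : (0 : ℝ) ≤ t - 1 := by linarith
      have hQc0 : -5/4 - 5*t - 5*t^2 + a*(4*t + 16*t^2 + 16*t^3)
          + a^2*(5/4 + 3*t - 3*t^2 - 8*t^3) ≤ 0 := by
        nlinarith [mul_nonneg hx hy, mul_nonneg (mul_nonneg hx hy) hy,
                   mul_nonneg (mul_nonneg (mul_nonneg hx hy) hy) hy,
                   mul_nonneg hx hx, mul_nonneg (mul_nonneg hx hx) hy,
                   mul_nonneg (mul_nonneg (mul_nonneg hx hx) hy) hy,
                   mul_nonneg (mul_nonneg (mul_nonneg (mul_nonneg hx hx) hy) hy) hy,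
                   mul_nonneg hy hy, mul_nonneg (mul_nonneg hy hy) hy,
                   mul_nonneg (mul_nonneg hx hy) hy]
      have hP1 : 0 ≤ 2 * β + a + 1 - 4 * a * t ^ 2 := by linarith
      have hP2 : 0 ≤ 4 * a * (t + 1) ^ 2 - (2 * β + a + 1) := by linarith
      have hA : 0 ≤ (2 * β + a + 1 - 4 * a * t ^ 2) * ((2 * t + 1) * (a - 2)) :=
        mul_nonneg hP1 (mul_nonneg (by linarith) (by linarith))
      have hB : 0 ≤ (2 * β + a + 1 - 4 * a * t ^ 2) *
          (4 * a * (t + 1) ^ 2 - (2 * β + a + 1)) := mul_nonneg hP1 hP2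
      linarith [hQc0, hA, hB]
  have hfin := (Real.le_sqrt hLnn hX0).mpr key
  rw [tS, tP]
  linarith [hfin]
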